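/- arXiv:2605.27688 — 2 statements merged into one kernel-verified Lean document; each statement's English description precedes it below -/
import Mathlib

section
/- Let p ≥ 2 and r ≥ 0. In the positive braid word w = ((σ_1 σ_2 ⋯ σ_{p-1})^p)^r (r full twists on p strands), any two distinct strands cross exactly 2r times. -/
open scoped Classical

/-- The orbit of `x` under a permutation `π`: `{π^n x : n ∈ ℤ}`. -/
def permOrbit {α : Type*} (π : Equiv.Perm α) (x : α) : Set α := {y | π.SameCycle x y}

/-- The number of orbits of a permutation. -/
noncomputable def orbitCount {α : Type*} (π : Equiv.Perm α) : ℕ :=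
  (Set.range (permOrbit π)).ncard

/-- The transposition of adjacent positions `i`, `i+1` (0-indexed) on `Fin p`,
corresponding to the braid letter `σ_{i+1}`; identity if out of range. -/
def stepPerm (p i : ℕ) : Equiv.Perm (Fin p) :=
  if h : i + 1 < p then Equiv.swap ⟨i, Nat.lt_of_succ_lt h⟩ ⟨i + 1, h⟩ else 1

/-- Position-tracking: `posAfter p w t` is the position function after the first
`t` letters of the positive braid word `w` (letter `i` denotes `σ_{i+1}`). -/
def posAfter (p : ℕ) (w : List ℕ) (t : ℕ) : Equiv.Perm (Fin p) :=
  ((w.take t).map (stepPerm p)).foldl (fun a g => g * a) 1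

/-- The underlying permutation of a positive braid word. -/
def permOf (p : ℕ) (w : List ℕ) : Equiv.Perm (Fin p) := posAfter p w w.length

/-- The number of letters of `w` at which strands `s` and `s'` cross. -/
def crossCount (p : ℕ) (w : List ℕ) (s s' : Fin p) : ℕ :=
  ((Finset.range w.length).filter fun t =>
    ({(posAfter p w t s).val, (posAfter p w t s').val} : Finset ℕ)
      = {w.getD t 0, w.getD t 0 + 1}).card

/-- Concatenation of `q` copies of the word `u`. -/
def wordPow (u : List ℕ) (q : ℕ) : List ℕ := (List.replicate q u).flatten

/-- The word `σ_1 σ_2 ⋯ σ_{m-1}` (0-indexed letters `0,…,m-2`). -/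
def ascBlock (m : ℕ) : List ℕ := List.range (m - 1)

/-- The full twist word `(σ_1 ⋯ σ_{p-1})^p` on `p` strands. -/
def fullTwistWord (p : ℕ) : List ℕ := wordPow (ascBlock p) p

/-- The orbit of `x` under `π`, as a finset. -/
noncomputable def orbitFinset (p : ℕ) (π : Equiv.Perm (Fin p)) (x : Fin p) : Finset (Fin p) :=
  Finset.univ.filter fun y => π.SameCycle x y

/-- Total number of crossings in `w` between the strands of the component of `s`
and the strands of the component of `s'` (components w.r.t. `π`). -/
noncomputable def crossBetween (p : ℕ) (w : List ℕ) (π : Equiv.Perm (Fin p))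
    (s s' : Fin p) : ℕ :=
  ∑ x ∈ orbitFinset p π s, ∑ y ∈ orbitFinset p π s', crossCount p w x y

/-- Linking number of the components of `s` and `s'` in the closure of the positive
braid word `w`: half the number of crossings between them. -/
noncomputable def linking (p : ℕ) (w : List ℕ) (π : Equiv.Perm (Fin p))
    (s s' : Fin p) : ℕ :=
  crossBetween p w π s s' / 2

/-- The 3-cycle `(0 1 2)` on `Fin N`, fixing all other points. -/
def tau3 (N : ℕ) (h : 3 ≤ N) : Equiv.Perm (Fin N) :=
  Equiv.swap ⟨0, by omega⟩ ⟨2, by omega⟩ * Equiv.swap ⟨0, by omega⟩ ⟨1, by omega⟩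

/-- `Fin s` is equivalent to the points of `Fin N` with value `< s`. -/
def subEquiv (s N : ℕ) (h : s ≤ N) : Fin s ≃ {x : Fin N // (x : ℕ) < s} where
  toFun x := ⟨⟨x, lt_of_lt_of_le x.2 h⟩, x.2⟩
  invFun y := ⟨(y.1 : ℕ), y.2⟩
  left_inv x := rfl
  right_inv y := rfl

/-- The permutation of `Fin N` acting as `x ↦ x + c (mod s)` on `{0,…,s-1}` and
fixing all points `≥ s`. -/
def tauShift (s c N : ℕ) (h : s ≤ N) : Equiv.Perm (Fin N) :=
  (finRotate s ^ c).extendDomain (subEquiv s N h)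

/-!
Read letter by letter, the block `σ_1 ⋯ σ_{p-1}` carries the strand in position `0` rightwards
past every other strand, crossing each of them once, while all other strands shift one position
to the left without crossing each other. So one block crosses the strands `a ≠ a'` exactly
`[a = 0] + [a' = 0]` times and moves positions by `(finRotate p)⁻¹`. In the `p` blocks of a full
twist every strand starts exactly one block in position `0`, so each pair crosses twice per full
twist; and `(finRotate p)⁻¹ ^ p = 1`, so the full twist is a pure braid and the `r` twists
contribute alike.
-/

theorem List.foldl_mul_left_eq_reverse_prod_mul {M : Type*} [Monoid M] (l : List M) (x : M) :
    l.foldl (fun a g => g * a) x = l.reverse.prod * x := by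
  induction l generalizing x with
  | nil => simp
  | cons g l ih => simp [ih, mul_assoc]

section BraidWord

open Finset Fin.NatCast

variable {p : ℕ}

theorem posAfter_eq_prod (w : List ℕ) (t : ℕ) :
    posAfter p w t = ((w.take t).map (stepPerm p)).reverse.prod := by
  rw [posAfter, List.foldl_mul_left_eq_reverse_prod_mul, mul_one]

theorem posAfter_succ {w : List ℕ} {t : ℕ} (ht : t < w.length) :
    posAfter p w (t + 1) = stepPerm p (w.getD t 0) * posAfter p w t := by
  rw [posAfter_eq_prod, posAfter_eq_prod, List.take_add_one, List.getElem?_eq_getElem ht,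
    List.getD_eq_getElem _ _ ht]
  simp only [Option.toList_some, List.map_append, List.reverse_append, List.prod_append]
  simp

theorem posAfter_append_of_le {u : List ℕ} (v : List ℕ) {t : ℕ} (ht : t ≤ u.length) :
    posAfter p (u ++ v) t = posAfter p u t := by
  rw [posAfter, posAfter, List.take_append_of_le_length ht]

theorem posAfter_append_length_add (u v : List ℕ) (t : ℕ) :
    posAfter p (u ++ v) (u.length + t) = posAfter p v t * permOf p u := by
  simp [posAfter_eq_prod, permOf, List.take_length_add_append]

theorem permOf_append (u v : List ℕ) : permOf p (u ++ v) = permOf p v * permOf p u := by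
  simpa [permOf] using posAfter_append_length_add (p := p) u v v.length

theorem wordPow_succ (u : List ℕ) (q : ℕ) : wordPow u (q + 1) = u ++ wordPow u q := by
  simp [wordPow, List.replicate_succ]

theorem permOf_wordPow (u : List ℕ) (q : ℕ) : permOf p (wordPow u q) = permOf p u ^ q := by
  induction q with
  | zero => rfl
  | succ q ih => rw [wordPow_succ, permOf_append, ih, pow_succ]

theorem crossCount_append (u v : List ℕ) (s s' : Fin p) :
    crossCount p (u ++ v) s s' =
      crossCount p u s s' + crossCount p v (permOf p u s) (permOf p u s') := by
  simp only [crossCount, card_filter, List.length_append, sum_range_add]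
  congr 1
  · refine sum_congr rfl fun t ht => ?_
    rw [mem_range] at ht
    rw [posAfter_append_of_le v ht.le, List.getD_append u v 0 t ht]
  · refine sum_congr rfl fun t _ => ?_
    rw [posAfter_append_length_add, List.getD_append_right u v 0 _ (by omega),
      Nat.add_sub_cancel_left]
    rfl

theorem crossCount_wordPow (u : List ℕ) (q : ℕ) (s s' : Fin p) :
    crossCount p (wordPow u q) s s' =
      ∑ b ∈ range q, crossCount p u ((permOf p u ^ b) s) ((permOf p u ^ b) s') := by
  induction q generalizing s s' with
  | zero => simp [wordPow, crossCount]
  | succ q ih =>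
    rw [wordPow_succ, crossCount_append, ih, sum_range_succ']
    simp [pow_succ, add_comm]

theorem stepPerm_apply_val {i : ℕ} (hi : i + 1 < p) (x : Fin p) :
    (stepPerm p i x).val = if x.val = i then i + 1 else if x.val = i + 1 then i else x.val := by
  rw [stepPerm, dif_pos hi, Equiv.swap_apply_def]
  split_ifs <;> simp_all [Fin.ext_iff]

theorem length_ascBlock : (ascBlock p).length = p - 1 := List.length_range

theorem getD_ascBlock {k : ℕ} (hk : k < p - 1) : (ascBlock p).getD k 0 = k := by
  rw [ascBlock, List.getD_eq_getElem _ _ (by simpa using hk), List.getElem_range]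

theorem posAfter_ascBlock_val {k : ℕ} (hk : k < p) (x : Fin p) :
    (posAfter p (ascBlock p) k x).val =
      if x.val = 0 then k else if x.val ≤ k then x.val - 1 else x.val := by
  induction k with
  | zero =>
    rw [show posAfter p (ascBlock p) 0 = 1 from rfl]
    split_ifs <;> simp <;> omega
  | succ k ih =>
    rw [posAfter_succ (by rw [length_ascBlock]; omega), getD_ascBlock (by omega),
      Equiv.Perm.mul_apply, stepPerm_apply_val hk]
    have hpos := ih (by omega)
    split_ifs at hpos ⊢ <;> omega

theorem permOf_ascBlock : permOf p (ascBlock p) = (finRotate p)⁻¹ := by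
  refine Equiv.ext fun x => ?_
  obtain ⟨n, rfl⟩ : ∃ n, p = n + 1 := Nat.exists_eq_add_one.mpr x.pos
  rw [Equiv.Perm.inv_def, finRotate_symm_apply, Fin.ext_iff, permOf, length_ascBlock,
    posAfter_ascBlock_val (by omega), Fin.coe_sub_one]
  simp only [Fin.ext_iff, Fin.val_zero]
  split_ifs <;> omega

theorem finRotate_inv_pow_apply [NeZero p] (b : ℕ) (x : Fin p) :
    ((finRotate p)⁻¹ ^ b) x = x - (b : Fin p) := by
  induction b with
  | zero => simp
  | succ b ih =>
    rw [pow_succ', Equiv.Perm.mul_apply, ih, Equiv.Perm.inv_def, finRotate_symm_apply,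
      Nat.cast_succ, sub_sub]

theorem permOf_fullTwistWord : permOf p (fullTwistWord p) = 1 := by
  refine Equiv.ext fun x => ?_
  have := x.neZero
  rw [fullTwistWord, permOf_wordPow, permOf_ascBlock, finRotate_inv_pow_apply, Fin.natCast_self]
  simp

theorem crossesAt_ascBlock_iff {a a' : Fin p} (h : a ≠ a') {k : ℕ} (hk : k < p - 1) :
    ({(posAfter p (ascBlock p) k a).val, (posAfter p (ascBlock p) k a').val} : Finset ℕ) =
        {(ascBlock p).getD k 0, (ascBlock p).getD k 0 + 1} ↔
      (a.val = 0 ∧ a'.val = k + 1) ∨ (a'.val = 0 ∧ a.val = k + 1) := by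
  rw [getD_ascBlock hk, ← Finset.coe_inj, Finset.coe_pair, Finset.coe_pair, Set.pair_eq_pair_iff,
    posAfter_ascBlock_val (by omega), posAfter_ascBlock_val (by omega)]
  have hne := Fin.val_ne_of_ne h
  split_ifs <;> omega

theorem crossCount_ascBlock {a a' : Fin p} (h : a ≠ a') :
    crossCount p (ascBlock p) a a' =
      (if a.val = 0 then 1 else 0) + (if a'.val = 0 then 1 else 0) := by
  rw [crossCount, length_ascBlock, filter_congr fun k hk => crossesAt_ascBlock_iff h
    (mem_range.1 hk)]
  have hne := Fin.val_ne_of_ne h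
  have ha := a.2
  have ha' := a'.2
  by_cases h0 : a.val = 0
  · rw [show (range (p - 1)).filter _ = {a'.val - 1} by
      ext; simp only [mem_filter, mem_range, mem_singleton]; omega]
    simp [h0, show a'.val ≠ 0 by omega]
  by_cases h0' : a'.val = 0
  · rw [show (range (p - 1)).filter _ = {a.val - 1} by
      ext; simp only [mem_filter, mem_range, mem_singleton]; omega]
    simp [h0, h0']
  · rw [show (range (p - 1)).filter _ = ∅ by
      ext; simp only [mem_filter, mem_range, notMem_empty, iff_false]; omega]
    simp [h0, h0']

theorem sum_range_ite_finRotate_inv_pow_val_eq_zero (x : Fin p) :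
    ∑ b ∈ range p, (if (((finRotate p)⁻¹ ^ b) x).val = 0 then 1 else 0) = 1 := by
  have := x.neZero
  have hiff : ∀ b ∈ range p, (((finRotate p)⁻¹ ^ b) x).val = 0 ↔ x.val = b := fun b hb => by
    rw [finRotate_inv_pow_apply, ← Fin.val_zero p, ← Fin.ext_iff, sub_eq_zero, Fin.ext_iff,
      Fin.val_natCast, Nat.mod_eq_of_lt (mem_range.1 hb)]
  rw [sum_congr rfl fun b hb => if_congr (hiff b hb) rfl rfl, sum_ite_eq, if_pos (mem_range.2 x.2)]

theorem crossCount_fullTwistWord {s s' : Fin p} (h : s ≠ s') :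
    crossCount p (fullTwistWord p) s s' = 2 := by
  rw [fullTwistWord, crossCount_wordPow, permOf_ascBlock]
  simp only [crossCount_ascBlock ((Equiv.injective _).ne h), sum_add_distrib,
    sum_range_ite_finRotate_inv_pow_val_eq_zero]

end BraidWord

theorem stmt5_general (p r : ℕ) (s s' : Fin p) (h : s ≠ s') :
    crossCount p (wordPow (fullTwistWord p) r) s s' = 2 * r := by
  rw [crossCount_wordPow, permOf_fullTwistWord]
  simp [crossCount_fullTwistWord h, mul_comm]

/-- In `r` full twists `((σ_1⋯σ_{p-1})^p)^r` on `p ≥ 2` strands, any two distinct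
strands cross exactly `2r` times. -/
theorem stmt5 (p r : ℕ) (hp : 2 ≤ p) (s s' : Fin p) (h : s ≠ s') :
    crossCount p (wordPow (fullTwistWord p) r) s s' = 2 * r :=
  stmt5_general p r s s' h
end

section
/- Let c, k be positive integers, set m = 2 + c and M = 2 + 2c + k(2+c) = (k+1)m + c. Define permutations of Fin M (0-indexed): ρ(x) = x + m (mod M), and τ acting on {0,…,m−1} by τ(x) = x + c (mod m), fixing points ≥ m; let π = τ ∘ ρ. Then the c points 2, 3, …, 1 + c lie in pairwise distinct orbits of π. (This is the permutation-level statement that strands 3 through 2+c of the braid representing T((2+c, c), (M, 2+c)) lie on pairwise distinct parallel components.) -/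
open scoped Classical

lemma rot_pow_val {n : ℕ} (t : ℕ) (x : Fin (n + 1)) :
    (((finRotate (n + 1)) ^ t) x : ℕ) = ((x : ℕ) + t) % (n + 1) := by
  induction t with
  | zero => simp [Nat.mod_eq_of_lt x.2]
  | succ t ih =>
    rw [pow_succ', Equiv.Perm.mul_apply, finRotate_succ_apply, Fin.add_def]
    simp only [Fin.val_one']
    rw [ih, ← Nat.add_assoc, Nat.add_mod ((x:ℕ)+t) 1]

lemma rot_pow_val' {n : ℕ} (hn : 0 < n) (t : ℕ) (x : Fin n) :
    (((finRotate n) ^ t) x : ℕ) = ((x : ℕ) + t) % n := by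
  cases n with
  | zero => omega
  | succ n => exact rot_pow_val t x

lemma tauShift_val_lt (s c N : ℕ) (h : s ≤ N) (x : Fin N) (hx : (x : ℕ) < s) :
    (tauShift s c N h x : ℕ) = ((x : ℕ) + c) % s := by
  rw [tauShift, Equiv.Perm.extendDomain_apply_subtype
    (p := fun y : Fin N => (y:ℕ) < s) _ _ hx]
  have hs : 0 < s := Nat.pos_of_ne_zero (by omega)
  show ((finRotate s ^ c) ((subEquiv s N h).symm ⟨x, hx⟩) : ℕ) = _
  rw [rot_pow_val' hs]
  rfl

lemma tauShift_val_ge (s c N : ℕ) (h : s ≤ N) (x : Fin N) (hx : ¬ (x : ℕ) < s) :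
    tauShift s c N h x = x := by
  rw [tauShift, Equiv.Perm.extendDomain_apply_not_subtype
    (p := fun y : Fin N => (y:ℕ) < s) _ _ hx]

lemma key_inv (m c k M : ℕ) (hm : m = 2 + c) (hMK : M = k * m + m + c)
    (h : m ≤ M) (x : Fin M) :
    (((tauShift m c M h * (finRotate M) ^ m) x : ℕ)) % m = (x : ℕ) % m := by
  have hM : 0 < M := by omega
  rw [Equiv.Perm.mul_apply]
  set y := ((finRotate M) ^ m) x with hy
  have hyv : (y : ℕ) = ((x : ℕ) + m) % M := rot_pow_val' hM m x
  have hxlt : (x : ℕ) < M := x.2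
  by_cases h2 : (x : ℕ) + m < M
  · have hyx : (y : ℕ) = (x : ℕ) + m := by rw [hyv, Nat.mod_eq_of_lt h2]
    have hge : ¬ (y : ℕ) < m := by omega
    rw [tauShift_val_ge _ _ _ _ _ hge, hyx, Nat.add_mod_right]
  · have hyx : (y : ℕ) = (x : ℕ) + m - M := by
      rw [hyv, Nat.mod_eq_sub_mod (by omega), Nat.mod_eq_of_lt (by omega)]
    have hlt : (y : ℕ) < m := by omega
    rw [tauShift_val_lt _ _ _ _ _ hlt, hyx]
    have he : (x : ℕ) + m - M + c = (x : ℕ) - k * m := by omega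
    have hsplit : (x : ℕ) = ((x : ℕ) - k * m) + k * m := by omega
    rw [he]
    conv_rhs => rw [hsplit]
    rw [Nat.add_mul_mod_self_right, Nat.mod_mod_of_dvd _ dvd_rfl]

lemma key_inv_pow (m c k M : ℕ) (hm : m = 2 + c) (hMK : M = k * m + m + c)
    (h : m ≤ M) (n : ℕ) (x : Fin M) :
    ((((tauShift m c M h * (finRotate M) ^ m) ^ n) x : ℕ)) % m = (x : ℕ) % m := by
  induction n with
  | zero => rfl
  | succ n ih =>
    rw [pow_succ', Equiv.Perm.mul_apply, key_inv m c k M hm hMK, ih]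

/-- For `m = 2 + c`, `M = (k+1)m + c` and `π = τ ∘ ρ` (the underlying permutation of
the braid of `T((2+c,c),(M,2+c))`), the `c` points `2, 3, …, 1+c` lie in pairwise
distinct orbits of `π`: strands `3` through `2+c` lie on pairwise distinct parallel
components. -/
theorem stmt17 (c k : ℕ) (hc : 0 < c) (hk : 0 < k) :
    ∀ i j : Fin ((k + 1) * (2 + c) + c),
      2 ≤ (i : ℕ) → (i : ℕ) < 2 + c → 2 ≤ (j : ℕ) → (j : ℕ) < 2 + c → i ≠ j →
      ¬ ((tauShift (2 + c) c ((k + 1) * (2 + c) + c)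
            (le_trans (Nat.le_mul_of_pos_left _ (Nat.succ_pos k)) (Nat.le_add_right _ _)) *
          (finRotate ((k + 1) * (2 + c) + c)) ^ (2 + c)).SameCycle i j) := by
  intro i j hi2 hi hj2 hj hij hsc
  obtain ⟨n, -, hn⟩ := hsc.exists_pow_eq'
  apply hij
  have hMK : (k + 1) * (2 + c) + c = k * (2 + c) + (2 + c) + c := by ring
  have := key_inv_pow (2 + c) c k ((k + 1) * (2 + c) + c) rfl hMK
    (le_trans (Nat.le_mul_of_pos_left _ (Nat.succ_pos k)) (Nat.le_add_right _ _)) n i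
  rw [hn] at this
  have hi' : (i : ℕ) % (2 + c) = (i : ℕ) := Nat.mod_eq_of_lt hi
  have hj' : (j : ℕ) % (2 + c) = (j : ℕ) := Nat.mod_eq_of_lt hj
  exact Fin.ext (by omega)
end
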